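/- Let V be a finite set of N nodes partitioned into two sensitive groups S₀ and S₁ of sizes N₀ ≥ 1 and N₁ ≥ 1, with features X : V → ℝ^d and iterates F⁽ᵏ⁾ produced by the fairness-aware message passing. For each k ≥ 0, let μ⁽ˢ⁾_k = (1/N_s)·Σ_{i∈S_s} F⁽ᵏ⁾_i denote the group means of F⁽ᵏ⁾ (so μ⁽ˢ⁾_0 = μ⁽ˢ⁾ are the group means of X), and let Δᵏ ∈ ℝ^d be the componentwise maximal deviation of F⁽ᵏ⁾ from its overall mean. Then for every K ≥ 1, ‖(1/N₀)·Σ_{i∈S₀} F⁽ᴷ⁾_i − (1/N₁)·Σ_{j∈S₁} F⁽ᴷ⁾_j‖ ≤ (3 − (1/(N₀N₁²) + 1/(N₀²N₁))·Σ_{i∈S₀} Σ_{j∈S₁} k(F⁽ᴷ⁻¹⁾_i, F⁽ᴷ⁻¹⁾_j))·‖μ⁽⁰⁾_{K−1} − μ⁽¹⁾_{K−1}‖ + ‖μ⁽⁰⁾ − μ⁽¹⁾‖ + (2 + 2/N₀ + 2/N₁)·‖Δᴷ⁻¹‖ + 2·‖Δ⁰‖. -/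

import Mathlib

/-!
Summed over a group, the within-group kernel terms of the update cancel in pairs (the kernel is
symmetric, `F_u - F_i` antisymmetric), and the cross-group sums of the two groups are negatives of
each other. Hence the gap of group means at layer `K` is the gap of the feature means, plus the gap
of the group means of neighbourhood averages, plus `(1/(N₀²N₁) + 1/(N₀N₁²))` times the cross-group
sum of `k(F_j, F_i)(F_j - F_i)`. Every row of `F⁽ᴷ⁻¹⁾`, hence every average of rows, lies within
`‖Δᴷ⁻¹‖` of the overall mean, and `0 ≤ k ≤ 1`; this bounds the last two terms by
`(2 + 2/N₀ + 2/N₁)‖Δᴷ⁻¹‖`. The remaining terms of the bound are nonnegative, the kernel sum being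
at most `N₀N₁`.
-/

open Matrix Finset

/-- RBF kernel `k(x,y) = exp(-α‖x-y‖²)`. -/
noncomputable def ker {d : ℕ} (α : ℝ) (x y : EuclideanSpace ℝ (Fin d)) : ℝ :=
  Real.exp (-α * ‖x - y‖ ^ 2)

/-- The sensitive group `S_b`, where group membership is given by `grp`
(`false` encodes `S₀` and `true` encodes `S₁`). -/
def sgrp {V : Type*} [Fintype V] (grp : V → Bool) (b : Bool) : Finset V :=
  Finset.univ.filter (fun i => grp i = b)

/-- Fairness-aware message passing: `F 0 = X`, and each layer `k ≥ 1` updates node `i`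
(lying in group `grp i`, with opposite group `!grp i`) by
`F⁽ᵏ⁾_i = X_i + (1/|N(i)|)·Σ_{u∈N(i)} F⁽ᵏ⁻¹⁾_u
       − (1/N_t²)·Σ_{u∈S_t} k(F⁽ᵏ⁻¹⁾_u,F⁽ᵏ⁻¹⁾_i)·F⁽ᵏ⁻¹⁾_u
       + (1/(N₀N₁))·Σ_{u∈S_{1−t}} k(F⁽ᵏ⁻¹⁾_u,F⁽ᵏ⁻¹⁾_i)·F⁽ᵏ⁻¹⁾_u
       + ((1/N_t²)·Σ_{u∈S_t} k(...) − (1/(N₀N₁))·Σ_{u∈S_{1−t}} k(...))·F⁽ᵏ⁻¹⁾_i`. -/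
def FairMP {V : Type*} [Fintype V] {d : ℕ} (α : ℝ) (grp : V → Bool)
    (Nb : V → Finset V) (X : V → EuclideanSpace ℝ (Fin d))
    (F : ℕ → V → EuclideanSpace ℝ (Fin d)) : Prop :=
  F 0 = X ∧
  ∀ k : ℕ, 1 ≤ k → ∀ i : V,
    F k i = X i + (((Nb i).card : ℝ)⁻¹) • ∑ u ∈ Nb i, F (k-1) u
      - (1 / ((sgrp grp (grp i)).card : ℝ) ^ 2) •
          ∑ u ∈ sgrp grp (grp i), ker α (F (k-1) u) (F (k-1) i) • F (k-1) u
      + (1 / (((sgrp grp false).card : ℝ) * ((sgrp grp true).card : ℝ))) •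
          ∑ u ∈ sgrp grp (!grp i), ker α (F (k-1) u) (F (k-1) i) • F (k-1) u
      + ((1 / ((sgrp grp (grp i)).card : ℝ) ^ 2) *
            ∑ u ∈ sgrp grp (grp i), ker α (F (k-1) u) (F (k-1) i)
         - (1 / (((sgrp grp false).card : ℝ) * ((sgrp grp true).card : ℝ))) *
            ∑ u ∈ sgrp grp (!grp i), ker α (F (k-1) u) (F (k-1) i)) • F (k-1) i

/-- Componentwise maximal deviation of the rows of `F` from the overall mean row:
`(dev F)_m = max_{i∈V} |F_{i,m} − (1/N)·Σ_{j∈V} F_{j,m}|`. -/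
noncomputable def dev {V : Type*} [Fintype V] {d : ℕ}
    (F : V → EuclideanSpace ℝ (Fin d)) : EuclideanSpace ℝ (Fin d) :=
  WithLp.toLp 2 (fun m => ⨆ i : V, |F i m - (1 / (Fintype.card V : ℝ)) * ∑ j : V, F j m|)

section Kernel

variable {d : ℕ}

lemma ker_nonneg (α : ℝ) (x y : EuclideanSpace ℝ (Fin d)) : 0 ≤ ker α x y :=
  (Real.exp_pos _).le

lemma ker_le_one {α : ℝ} (hα : 0 ≤ α) (x y : EuclideanSpace ℝ (Fin d)) : ker α x y ≤ 1 :=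
  Real.exp_le_one_iff.mpr (by rw [neg_mul]; exact neg_nonpos.mpr (by positivity))

lemma ker_comm (α : ℝ) (x y : EuclideanSpace ℝ (Fin d)) : ker α x y = ker α y x := by
  rw [ker, ker, norm_sub_rev]

lemma norm_ker_smul_sub_le {α : ℝ} (hα : 0 ≤ α) {c x y : EuclideanSpace ℝ (Fin d)} {r : ℝ}
    (hx : ‖x - c‖ ≤ r) (hy : ‖y - c‖ ≤ r) : ‖ker α x y • (x - y)‖ ≤ 2 * r := by
  rw [norm_smul, Real.norm_of_nonneg (ker_nonneg α x y)]
  calc ker α x y * ‖x - y‖ ≤ 1 * (‖x - c‖ + ‖y - c‖) := by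
        gcongr
        · exact ker_le_one hα x y
        · exact norm_sub_rev y c ▸ norm_sub_le_norm_sub_add_norm_sub x c y
    _ ≤ 2 * r := by linarith

lemma sum_sum_ker_le_card_mul_card {ι κ : Type*} {α : ℝ} (hα : 0 ≤ α) (s : Finset ι)
    (t : Finset κ) (x : ι → EuclideanSpace ℝ (Fin d)) (y : κ → EuclideanSpace ℝ (Fin d)) :
    ∑ i ∈ s, ∑ j ∈ t, ker α (x i) (y j) ≤ #s * #t := by
  calc ∑ i ∈ s, ∑ j ∈ t, ker α (x i) (y j) ≤ ∑ i ∈ s, ∑ j ∈ t, (1 : ℝ) :=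
        sum_le_sum fun i _ => sum_le_sum fun j _ => ker_le_one hα _ _
    _ = #s * #t := by simp

end Kernel

section FiniteSums

variable {ι κ E : Type*} [SeminormedAddCommGroup E]

lemma norm_inv_card_smul_sum_sub_le [NormedSpace ℝ E] {s : Finset ι} (hs : s.Nonempty)
    {v : ι → E} {c : E} {r : ℝ} (h : ∀ i ∈ s, ‖v i - c‖ ≤ r) :
    ‖(#s : ℝ)⁻¹ • ∑ i ∈ s, v i - c‖ ≤ r := by
  have hmem : (#s : ℝ)⁻¹ • ∑ i ∈ s, v i ∈ Metric.closedBall c r := by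
    rw [smul_sum]
    refine (convex_closedBall c r).sum_mem (fun _ _ => by positivity) ?_ fun i hi => ?_
    · rw [sum_const, nsmul_eq_mul, mul_inv_cancel₀ (by exact_mod_cast hs.card_pos.ne')]
    · simpa [dist_eq_norm] using h i hi
  simpa [dist_eq_norm] using hmem

lemma norm_sum_sum_le {s : Finset ι} {t : Finset κ} {f : ι → κ → E} {r : ℝ}
    (h : ∀ i ∈ s, ∀ j ∈ t, ‖f i j‖ ≤ r) : ‖∑ i ∈ s, ∑ j ∈ t, f i j‖ ≤ #s * #t * r := by
  calc ‖∑ i ∈ s, ∑ j ∈ t, f i j‖ ≤ ∑ i ∈ s, ∑ j ∈ t, r :=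
        norm_sum_le_of_le s fun i hi => norm_sum_le_of_le t (h i hi)
    _ = #s * #t * r := by simp only [sum_const, nsmul_eq_mul]; ring

lemma sum_sum_eq_neg_of_antisymm {M : Type*} [AddCommGroup M] (s t : Finset ι)
    {f : ι → ι → M} (h : ∀ i j, f i j = -f j i) :
    ∑ i ∈ s, ∑ j ∈ t, f i j = -∑ j ∈ t, ∑ i ∈ s, f j i := by
  rw [sum_comm]
  simp only [← sum_neg_distrib, ← h]

lemma sum_sum_eq_zero_of_antisymm {M : Type*} [AddCommGroup M] [IsAddTorsionFree M]
    (s : Finset ι) {f : ι → ι → M} (h : ∀ i j, f i j = -f j i) :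
    ∑ i ∈ s, ∑ j ∈ s, f i j = 0 :=
  self_eq_neg.mp (sum_sum_eq_neg_of_antisymm s s h)

end FiniteSums

lemma norm_sub_mean_le_norm_dev {V : Type*} [Fintype V] {d : ℕ}
    (G : V → EuclideanSpace ℝ (Fin d)) (i : V) :
    ‖G i - (Fintype.card V : ℝ)⁻¹ • ∑ j, G j‖ ≤ ‖dev G‖ := by
  rw [EuclideanSpace.norm_eq, EuclideanSpace.norm_eq]
  gcongr with m
  simp only [dev, PiLp.toLp_apply, PiLp.sub_apply, PiLp.smul_apply, WithLp.ofLp_sum,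
    Finset.sum_apply, smul_eq_mul, Real.norm_eq_abs, one_div]
  exact (le_ciSup (f := fun i => |G i m - (Fintype.card V : ℝ)⁻¹ * ∑ j, G j m|)
    (Finite.bddAbove_range _) i).trans (le_abs_self _)

noncomputable def groupMean {V E : Type*} [Fintype V] [AddCommGroup E] [Module ℝ E]
    (grp : V → Bool) (G : V → E) (b : Bool) : E :=
  (#(sgrp grp b) : ℝ)⁻¹ • ∑ i ∈ sgrp grp b, G i

noncomputable def nbMean {V E : Type*} [AddCommGroup E] [Module ℝ E]
    (Nb : V → Finset V) (G : V → E) (i : V) : E :=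
  (#(Nb i) : ℝ)⁻¹ • ∑ u ∈ Nb i, G u

namespace FairMP

variable {V : Type*} [Fintype V] {d : ℕ} {α : ℝ} {grp : V → Bool} {Nb : V → Finset V}
  {X : V → EuclideanSpace ℝ (Fin d)} {F : ℕ → V → EuclideanSpace ℝ (Fin d)}

lemma step_eq (hF : FairMP α grp Nb X F) {k : ℕ} (hk : 1 ≤ k) (i : V) :
    F k i = X i + nbMean Nb (F (k-1)) i
      + (1 / ((#(sgrp grp false) : ℝ) * #(sgrp grp true))) •
          ∑ u ∈ sgrp grp (!grp i), ker α (F (k-1) u) (F (k-1) i) • (F (k-1) u - F (k-1) i)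
      - (1 / (#(sgrp grp (grp i)) : ℝ) ^ 2) •
          ∑ u ∈ sgrp grp (grp i), ker α (F (k-1) u) (F (k-1) i) • (F (k-1) u - F (k-1) i) := by
  rw [hF.2 k hk i, nbMean]
  simp only [smul_sub, sum_sub_distrib, ← sum_smul]
  module

lemma sum_group_eq (hF : FairMP α grp Nb X F) {k : ℕ} (hk : 1 ≤ k) (b : Bool) :
    ∑ i ∈ sgrp grp b, F k i = ∑ i ∈ sgrp grp b, X i + ∑ i ∈ sgrp grp b, nbMean Nb (F (k-1)) i
      + (1 / ((#(sgrp grp false) : ℝ) * #(sgrp grp true))) •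
          ∑ i ∈ sgrp grp b, ∑ u ∈ sgrp grp (!b),
            ker α (F (k-1) u) (F (k-1) i) • (F (k-1) u - F (k-1) i) := by
  have := IsAddTorsionFree.of_isTorsionFree ℝ (EuclideanSpace ℝ (Fin d))
  have hgrp : ∀ i ∈ sgrp grp b, grp i = b := fun i hi => (mem_filter.mp hi).2
  rw [sum_congr rfl fun i hi => (hgrp i hi ▸ hF.step_eq hk i), sum_sub_distrib,
    sum_add_distrib, sum_add_distrib, ← smul_sum, ← smul_sum,
    sum_sum_eq_zero_of_antisymm _ fun i u => by rw [ker_comm, ← neg_sub, smul_neg], smul_zero,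
    sub_zero]

lemma groupMean_sub_eq (hF : FairMP α grp Nb X F) {k : ℕ} (hk : 1 ≤ k)
    (h₀ : (sgrp grp false).Nonempty) (h₁ : (sgrp grp true).Nonempty) :
    groupMean grp (F k) false - groupMean grp (F k) true =
      (groupMean grp X false - groupMean grp X true)
      + (groupMean grp (nbMean Nb (F (k-1))) false - groupMean grp (nbMean Nb (F (k-1))) true)
      + (1 / ((#(sgrp grp false) : ℝ) ^ 2 * #(sgrp grp true))
          + 1 / ((#(sgrp grp false) : ℝ) * #(sgrp grp true) ^ 2)) •
        ∑ i ∈ sgrp grp false, ∑ j ∈ sgrp grp true,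
          ker α (F (k-1) j) (F (k-1) i) • (F (k-1) j - F (k-1) i) := by
  have hn₀ : (#(sgrp grp false) : ℝ) ≠ 0 := by exact_mod_cast h₀.card_pos.ne'
  have hn₁ : (#(sgrp grp true) : ℝ) ≠ 0 := by exact_mod_cast h₁.card_pos.ne'
  simp only [groupMean, hF.sum_group_eq hk, Bool.not_false, Bool.not_true]
  rw [sum_sum_eq_neg_of_antisymm _ _ fun j i => by rw [ker_comm, ← neg_sub, smul_neg]]
  match_scalars <;> field_simp
  ring

lemma norm_groupMean_sub_le (hα : 0 ≤ α) (hF : FairMP α grp Nb X F)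
    (hNb : ∀ i, (Nb i).Nonempty) (h₀ : (sgrp grp false).Nonempty)
    (h₁ : (sgrp grp true).Nonempty) {k : ℕ} (hk : 1 ≤ k) :
    ‖groupMean grp (F k) false - groupMean grp (F k) true‖ ≤
      ‖groupMean grp X false - groupMean grp X true‖
        + (2 + 2 / (#(sgrp grp false) : ℝ) + 2 / #(sgrp grp true)) * ‖dev (F (k-1))‖ := by
  set G := F (k-1)
  set c := (Fintype.card V : ℝ)⁻¹ • ∑ j, G j
  set Δ := ‖dev G‖
  have hG : ∀ i, ‖G i - c‖ ≤ Δ := norm_sub_mean_le_norm_dev G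
  have hnb : ∀ b, (sgrp grp b).Nonempty → ‖groupMean grp (nbMean Nb G) b - c‖ ≤ Δ :=
    fun b hb => norm_inv_card_smul_sum_sub_le hb fun i _ =>
      norm_inv_card_smul_sum_sub_le (hNb i) fun u _ => hG u
  have hnb_gap : ‖groupMean grp (nbMean Nb G) false - groupMean grp (nbMean Nb G) true‖ ≤
      2 * Δ := by
    refine (norm_sub_le_norm_sub_add_norm_sub _ c _).trans ?_
    rw [norm_sub_rev c]
    linarith [hnb false h₀, hnb true h₁]
  have hcross : ‖∑ i ∈ sgrp grp false, ∑ j ∈ sgrp grp true, ker α (G j) (G i) • (G j - G i)‖ ≤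
      #(sgrp grp false) * #(sgrp grp true) * (2 * Δ) :=
    norm_sum_sum_le fun i _ j _ => norm_ker_smul_sub_le hα (hG j) (hG i)
  have hn₀ : (0 : ℝ) < #(sgrp grp false) := by exact_mod_cast h₀.card_pos
  have hn₁ : (0 : ℝ) < #(sgrp grp true) := by exact_mod_cast h₁.card_pos
  rw [hF.groupMean_sub_eq hk h₀ h₁]
  refine (norm_add₃_le ..).trans ?_
  rw [norm_smul, Real.norm_of_nonneg (by positivity)]
  calc _ ≤ ‖groupMean grp X false - groupMean grp X true‖ + 2 * Δ
        + (1 / ((#(sgrp grp false) : ℝ) ^ 2 * #(sgrp grp true))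
          + 1 / ((#(sgrp grp false) : ℝ) * #(sgrp grp true) ^ 2)) *
          (#(sgrp grp false) * #(sgrp grp true) * (2 * Δ)) := by gcongr
    _ = _ := by field_simp; ring

end FairMP

/-- For every `K ≥ 1`, the group-mean gap of `F⁽ᴷ⁾` is bounded by
`(3 − (1/(N₀N₁²) + 1/(N₀²N₁))·Σ_{i∈S₀}Σ_{j∈S₁} k(F⁽ᴷ⁻¹⁾_i, F⁽ᴷ⁻¹⁾_j))·‖μ⁽⁰⁾_{K−1} − μ⁽¹⁾_{K−1}‖
  + ‖μ⁽⁰⁾ − μ⁽¹⁾‖ + (2 + 2/N₀ + 2/N₁)·‖Δᴷ⁻¹‖ + 2·‖Δ⁰‖`. -/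
theorem stmt11 {V : Type*} [Fintype V] {d : ℕ} {α : ℝ} (hα : 0 < α)
    (grp : V → Bool) (N₀ N₁ : ℕ)
    (hcard0 : (sgrp grp false).card = N₀) (hcard1 : (sgrp grp true).card = N₁)
    (hN₀ : 1 ≤ N₀) (hN₁ : 1 ≤ N₁)
    (Nb : V → Finset V) (hNb : ∀ i, (Nb i).Nonempty)
    (X : V → EuclideanSpace ℝ (Fin d)) (F : ℕ → V → EuclideanSpace ℝ (Fin d))
    (hF : FairMP α grp Nb X F)
    (μ : ℕ → Bool → EuclideanSpace ℝ (Fin d))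
    (hμ : ∀ k b, μ k b = (((sgrp grp b).card : ℝ))⁻¹ • ∑ i ∈ sgrp grp b, F k i) :
    ∀ K : ℕ, 1 ≤ K →
      ‖(1 / (N₀ : ℝ)) • ∑ i ∈ sgrp grp false, F K i
          - (1 / (N₁ : ℝ)) • ∑ j ∈ sgrp grp true, F K j‖ ≤
        (3 - (1 / ((N₀ : ℝ) * (N₁ : ℝ) ^ 2) + 1 / ((N₀ : ℝ) ^ 2 * (N₁ : ℝ))) *
            ∑ i ∈ sgrp grp false, ∑ j ∈ sgrp grp true, ker α (F (K-1) i) (F (K-1) j)) *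
          ‖μ (K-1) false - μ (K-1) true‖
        + ‖μ 0 false - μ 0 true‖
        + (2 + 2 / (N₀ : ℝ) + 2 / (N₁ : ℝ)) * ‖dev (F (K-1))‖ + 2 * ‖dev (F 0)‖ := by
  intro K hK
  subst hcard0 hcard1
  have hmain := hF.norm_groupMean_sub_le hα.le hNb (card_pos.mp hN₀) (card_pos.mp hN₁) hK
  have hS := sum_sum_ker_le_card_mul_card hα.le (sgrp grp false) (sgrp grp true)
    (F (K-1)) (F (K-1))
  have hn₀ : (1 : ℝ) ≤ #(sgrp grp false) := by exact_mod_cast hN₀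
  have hn₁ : (1 : ℝ) ≤ #(sgrp grp true) := by exact_mod_cast hN₁
  set S := ∑ i ∈ sgrp grp false, ∑ j ∈ sgrp grp true, ker α (F (K-1) i) (F (K-1) j)
  set n₀ : ℝ := (#(sgrp grp false) : ℝ)
  set n₁ : ℝ := (#(sgrp grp true) : ℝ)
  have hcoef : 0 ≤ 3 - (1 / (n₀ * n₁ ^ 2) + 1 / (n₀ ^ 2 * n₁)) * S := by
    have : (1 / (n₀ * n₁ ^ 2) + 1 / (n₀ ^ 2 * n₁)) * S ≤ 1 / n₁ + 1 / n₀ :=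
      calc _ ≤ (1 / (n₀ * n₁ ^ 2) + 1 / (n₀ ^ 2 * n₁)) * (n₀ * n₁) := by gcongr
        _ = 1 / n₁ + 1 / n₀ := by field_simp
    linarith [div_le_one_of_le₀ hn₀ (by positivity), div_le_one_of_le₀ hn₁ (by positivity)]
  have hX : ∀ b, μ 0 b = groupMean grp X b := fun b => by rw [hμ, hF.1, groupMean]
  have hgap : (1 / n₀) • ∑ i ∈ sgrp grp false, F K i - (1 / n₁) • ∑ j ∈ sgrp grp true, F K j =
      groupMean grp (F K) false - groupMean grp (F K) true := by
    simp only [groupMean, one_div, n₀, n₁]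
  rw [hgap, hX, hX]
  linarith [mul_nonneg hcoef (norm_nonneg (μ (K-1) false - μ (K-1) true)),
    norm_nonneg (dev (F 0))]
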